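/- If τ is a rooted binary tree topology on X and X̄ ⊆ X with |X̄| ≥ 2, then the restriction τ|X̄ = { s|X̄ : s ∈ τ, s|X̄ nontrivial } is a rooted binary tree topology on X̄. -/

import Mathlib

open Finset

attribute [local instance] Classical.propDecidable

/-- A subsplit on taxa of type `α`: an unordered pair of finite subsets of taxa. -/
abbrev Subsplit (α : Type*) := Sym2 (Finset α)

/-- A parent-child subsplit pair (PCSP): a pair `(t, s)` of subsplits. -/
abbrev PCSPair (α : Type*) := Subsplit α × Subsplit α

namespace Subsplit

variable {α : Type*} [DecidableEq α]

/-- The parent clade `U(s)` of a subsplit: the union of its two child clades. -/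
def clade (s : Subsplit α) : Finset α :=
  Sym2.lift ⟨fun Y Z => Y ∪ Z, fun _ _ => Finset.union_comm _ _⟩ s

/-- A subsplit is valid when its two child clades are disjoint. -/
def Valid (s : Subsplit α) : Prop :=
  Sym2.lift ⟨fun Y Z => Disjoint Y Z, fun _ _ => propext disjoint_comm⟩ s

/-- A subsplit is nontrivial when both child clades are nonempty. -/
def Nontriv (s : Subsplit α) : Prop :=
  Sym2.lift ⟨fun Y Z => Y.Nonempty ∧ Z.Nonempty, fun _ _ => propext and_comm⟩ s

/-- Restriction of a subsplit to a taxon subset `B`. -/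
def restrict (s : Subsplit α) (B : Finset α) : Subsplit α := Sym2.map (fun Y => Y ∩ B) s

end Subsplit

section Defs

variable {α : Type*} [DecidableEq α]

/-- `τ` is a rooted binary tree topology on the clade `W`. -/
structure IsTopology (W : Finset α) (τ : Finset (Subsplit α)) : Prop where
  two_le : 2 ≤ W.card
  valid : ∀ s ∈ τ, Subsplit.Valid s
  nontriv : ∀ s ∈ τ, Subsplit.Nontriv s
  root : ∃! s, s ∈ τ ∧ Subsplit.clade s = W
  children : ∀ s ∈ τ, ∀ C ∈ s, 2 ≤ C.card → ∃! s', s' ∈ τ ∧ Subsplit.clade s' = C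
  parentEx : ∀ s ∈ τ, Subsplit.clade s = W ∨ ∃ t ∈ τ, Subsplit.clade s ∈ t

/-- Restriction of a topology (set of subsplits) to taxon subset `B`:
restrict every subsplit and keep the nontrivial results. -/
noncomputable def restrictT (τ : Finset (Subsplit α)) (B : Finset α) : Finset (Subsplit α) :=
  (τ.image (fun s => Subsplit.restrict s B)).filter (fun s => Subsplit.Nontriv s)

/-- A subsplit support on taxon set `X'`: a set of valid nontrivial subsplits on `X'`. -/
def IsSupport (X' : Finset α) (S : Set (Subsplit α)) : Prop :=
  ∀ s ∈ S, Subsplit.Valid s ∧ Subsplit.Nontriv s ∧ Subsplit.clade s ⊆ X'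

/-- `S(W)`: members of `S` dividing the clade `W`, together with the trivial subsplit `{W, ∅}`. -/
def supportAt (S : Set (Subsplit α)) (W : Finset α) : Set (Subsplit α) :=
  {s | s ∈ S ∧ Subsplit.clade s = W} ∪ {Sym2.mk W (∅ : Finset α)}

/-- The set `s₁ ⊠ s₂` of the two candidate combinations of two subsplits. -/
def boxTimes (s₁ s₂ : Subsplit α) : Set (Subsplit α) :=
  {s | ∃ Y₁ Z₁ Y₂ Z₂ : Finset α, s₁ = Sym2.mk Y₁ Z₁ ∧ s₂ = Sym2.mk Y₂ Z₂ ∧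
    (s = Sym2.mk (Y₁ ∪ Y₂) (Z₁ ∪ Z₂) ∨ s = Sym2.mk (Y₁ ∪ Z₂) (Z₁ ∪ Y₂))}

/-- Reachable clades in the mutual subsplit support construction. -/
inductive ReachClade (S₁ S₂ : Set (Subsplit α)) (X₁ X₂ : Finset α) : Finset α → Prop
  | root : ReachClade S₁ S₂ X₁ X₂ (X₁ ∪ X₂)
  | step {W : Finset α} {s₁ s₂ s : Subsplit α} {C : Finset α} :
      ReachClade S₁ S₂ X₁ X₂ W →
      s₁ ∈ supportAt S₁ (W ∩ X₁) → s₂ ∈ supportAt S₂ (W ∩ X₂) →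
      s ∈ boxTimes s₁ s₂ → Subsplit.Valid s → Subsplit.Nontriv s →
      C ∈ s → 2 ≤ C.card → ReachClade S₁ S₂ X₁ X₂ C

/-- The mutual subsplit support `M(S₁, S₂)`. -/
def mutualSupport (S₁ S₂ : Set (Subsplit α)) (X₁ X₂ : Finset α) : Set (Subsplit α) :=
  {s | ∃ W s₁ s₂, ReachClade S₁ S₂ X₁ X₂ W ∧
    s₁ ∈ supportAt S₁ (W ∩ X₁) ∧ s₂ ∈ supportAt S₂ (W ∩ X₂) ∧
    s ∈ boxTimes s₁ s₂ ∧ Subsplit.Valid s ∧ Subsplit.Nontriv s}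

/-- `(t, s)` is a PCSP on taxon set `X`: `s` is a valid nontrivial subsplit, and `t` is a
subsplit (or the root placeholder `⟨X, ∅⟩`) on `X` having `U(s)` as a child clade. -/
def IsPCSPOn (X : Finset α) (p : PCSPair α) : Prop :=
  Subsplit.Valid p.2 ∧ Subsplit.Nontriv p.2 ∧ Subsplit.Valid p.1 ∧
    Subsplit.clade p.2 ∈ p.1 ∧ Subsplit.clade p.1 ⊆ X ∧
    (Subsplit.Nontriv p.1 ∨ p.1 = Sym2.mk X (∅ : Finset α))

/-- A PCSP support on taxon set `X'`. -/
def IsPCSPSupport (X' : Finset α) (P : Set (PCSPair α)) : Prop :=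
  ∀ p ∈ P, IsPCSPOn X' p

/-- The subsplits of a PCSP support: subsplits occurring in some pair of `P`,
together with the root placeholder `⟨X', ∅⟩`. -/
def subsplitsOfP (X' : Finset α) (P : Set (PCSPair α)) : Set (Subsplit α) :=
  {u | (∃ s, (u, s) ∈ P) ∨ (∃ t, (t, u) ∈ P)} ∪ {Sym2.mk X' (∅ : Finset α)}

/-- `P(t/W)`: the subsplits `s` with `U(s) = W` and `(t → s) ∈ P`,
together with the trivial subsplit `{W, ∅}`. -/
def pcspSupportAt (P : Set (PCSPair α)) (t : Subsplit α) (W : Finset α) : Set (Subsplit α) :=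
  {s | Subsplit.clade s = W ∧ (t, s) ∈ P} ∪ {Sym2.mk W (∅ : Finset α)}

/-- Reachable states `(t/W, t₁/W₁, t₂/W₂)` in the mutual PCSP support construction. -/
inductive ReachState (P₁ P₂ : Set (PCSPair α)) (X₁ X₂ : Finset α) :
    Subsplit α → Finset α → Subsplit α → Finset α → Subsplit α → Finset α → Prop
  | root : ReachState P₁ P₂ X₁ X₂ (Sym2.mk (X₁ ∪ X₂) (∅ : Finset α)) (X₁ ∪ X₂)
      (Sym2.mk X₁ (∅ : Finset α)) X₁ (Sym2.mk X₂ (∅ : Finset α)) X₂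
  | step {t : Subsplit α} {W : Finset α} {t₁ : Subsplit α} {W₁ : Finset α}
      {t₂ : Subsplit α} {W₂ : Finset α} {s₁ s₂ s u₁ u₂ : Subsplit α} {C : Finset α} :
      ReachState P₁ P₂ X₁ X₂ t W t₁ W₁ t₂ W₂ →
      s₁ ∈ pcspSupportAt P₁ t₁ W₁ → s₂ ∈ pcspSupportAt P₂ t₂ W₂ →
      s ∈ boxTimes s₁ s₂ → Subsplit.Valid s → Subsplit.Nontriv s →
      ((Subsplit.Nontriv s₁ ∧ u₁ = s₁) ∨ (¬ Subsplit.Nontriv s₁ ∧ u₁ = t₁)) →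
      ((Subsplit.Nontriv s₂ ∧ u₂ = s₂) ∨ (¬ Subsplit.Nontriv s₂ ∧ u₂ = t₂)) →
      C ∈ s → 2 ≤ C.card →
      ReachState P₁ P₂ X₁ X₂ s C u₁ (C ∩ X₁) u₂ (C ∩ X₂)

/-- The mutual PCSP support `M(P₁, P₂)`. -/
def mutualPCSP (P₁ P₂ : Set (PCSPair α)) (X₁ X₂ : Finset α) : Set (PCSPair α) :=
  {p | ∃ W t₁ W₁ t₂ W₂ s₁ s₂, ReachState P₁ P₂ X₁ X₂ p.1 W t₁ W₁ t₂ W₂ ∧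
    s₁ ∈ pcspSupportAt P₁ t₁ W₁ ∧ s₂ ∈ pcspSupportAt P₂ t₂ W₂ ∧
    p.2 ∈ boxTimes s₁ s₂ ∧ Subsplit.Valid p.2 ∧ Subsplit.Nontriv p.2}

/-- `PathTo M a c`: there is a chain of parent-child pairs of `M` from `a` down to `c`
(possibly empty, when `a = c`). -/
inductive PathTo (M : Set (PCSPair α)) : Subsplit α → Subsplit α → Prop
  | refl (a : Subsplit α) : PathTo M a a
  | cons {a b c : Subsplit α} : (a, b) ∈ M → PathTo M b c → PathTo M a c

/-- `(t, s)` is a PCSP of the topology `τ` on `X`: `s ∈ τ` and `t` is a member of `τ`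
having `U(s)` as a child clade, or the root placeholder `⟨X, ∅⟩` when `U(s) = X`. -/
def IsPCSPOf (X : Finset α) (τ : Finset (Subsplit α)) (t s : Subsplit α) : Prop :=
  s ∈ τ ∧ ((t ∈ τ ∧ Subsplit.clade s ∈ t) ∨
    (Subsplit.clade s = X ∧ t = Sym2.mk X (∅ : Finset α)))

/-- The set of PCSPs of a topology `τ` on `X`. -/
def pcspSet (X : Finset α) (τ : Finset (Subsplit α)) : Set (PCSPair α) :=
  {p | IsPCSPOf X τ p.1 p.2}

/-- `a` is an ancestor of `s` in `τ`: `a ∈ τ` (or the root placeholder) and `U(s)` is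
contained in a child clade of `a`. -/
def IsAncestor (X : Finset α) (τ : Finset (Subsplit α)) (a s : Subsplit α) : Prop :=
  (a ∈ τ ∨ a = Sym2.mk X (∅ : Finset α)) ∧ ∃ C ∈ a, Subsplit.clade s ⊆ C

/-- `d` is a strict descendant of `a`: `U(d)` is contained in a child clade of `a`. -/
def StrictDesc (a d : Subsplit α) : Prop := ∃ C ∈ a, Subsplit.clade d ⊆ C

/-- `d` is a (valid) descendant of `a`: `d = a`, or `U(d)` is contained in a child clade
of `a`. -/
def Descend (a d : Subsplit α) : Prop := d = a ∨ ∃ C ∈ a, Subsplit.clade d ⊆ C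

/-- The parent subsplit of `s` in `τ` (on taxon set `X`): the member of `τ` having `U(s)`
as a child clade if one exists, otherwise the root placeholder `⟨X, ∅⟩`. -/
noncomputable def parentIn (X : Finset α) (τ : Finset (Subsplit α)) (s : Subsplit α) :
    Subsplit α :=
  if h : ∃ t ∈ τ, Subsplit.clade s ∈ t then h.choose else Sym2.mk X (∅ : Finset α)

/-- The finite set of PCSPs of a topology `τ` on `X`. -/
noncomputable def pcspFinset (X : Finset α) (τ : Finset (Subsplit α)) : Finset (PCSPair α) :=
  τ.image (fun s => (parentIn X τ s, s))

/-- All (valid) subsplits on the taxon set `X`. -/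
noncomputable def allSubsplits (X : Finset α) : Finset (Subsplit α) :=
  ((X.powerset ×ˢ X.powerset).image (fun p => Sym2.mk p.1 p.2)).filter (fun s => Subsplit.Valid s)

/-- All nontrivial (valid) subsplits dividing the clade `W`. -/
noncomputable def subsplitsOn (W : Finset α) : Finset (Subsplit α) :=
  (W.powerset.image (fun Y => Sym2.mk Y (W \ Y))).filter (fun s => Subsplit.Nontriv s)

/-- All nontrivial subsplits whose parent clade is a child clade of `a`. -/
noncomputable def childSubsplits (a : Subsplit α) : Finset (Subsplit α) :=
  Sym2.lift ⟨fun Y Z => subsplitsOn Y ∪ subsplitsOn Z, fun _ _ => Finset.union_comm _ _⟩ a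

end Defs

section CCD

variable {α : Type*} [DecidableEq α]

/-- CCD softmax conditional probability `q(s | U(s))`. -/
noncomputable def ccdCond (v : Subsplit α → ℝ) (s : Subsplit α) : ℝ :=
  Real.exp (v s) / ∑ s' ∈ subsplitsOn (Subsplit.clade s), Real.exp (v s')

/-- CCD probability of a topology: `q(τ) = ∏_{s ∈ τ} q(s | U(s))`. -/
noncomputable def ccdTopProb (v : Subsplit α → ℝ) (τ : Finset (Subsplit α)) : ℝ :=
  ∏ s ∈ τ, ccdCond v s

/-- Unconditional subsplit probability `q(s)`: sum of `q(τ)` over topologies `τ ∈ T`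
containing `s`. -/
noncomputable def ccdSubProb (T : Finset (Finset (Subsplit α))) (v : Subsplit α → ℝ)
    (s : Subsplit α) : ℝ :=
  ∑ τ ∈ T.filter (fun τ => s ∈ τ), ccdTopProb v τ

/-- Unconditional clade probability `q(W)`: sum of `q(τ)` over topologies `τ ∈ T` in which
the clade `W` appears (i.e. `W = X` or `W` is a child clade of some subsplit of `τ`). -/
noncomputable def ccdCladeProb (X : Finset α) (T : Finset (Finset (Subsplit α)))
    (v : Subsplit α → ℝ) (W : Finset α) : ℝ :=
  ∑ τ ∈ T.filter (fun τ => W = X ∨ ∃ s ∈ τ, W ∈ s), ccdTopProb v τ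

/-- Fuel-based recursion computing the CCD conditional path probability. -/
noncomputable def ccdPathAux (v : Subsplit α → ℝ) : ℕ → Subsplit α → Subsplit α → ℝ
  | 0, a, d => if d = a then 1 else 0
  | n + 1, a, d => if d = a then 1 else
      ∑ s'' ∈ childSubsplits a, ccdCond v s'' * ccdPathAux v n s'' d

/-- CCD conditional path probability `q(a →* d | a)`: the sum over all descending chains of
subsplits from `a` to `d` of the product of the conditional probabilities along the chain. -/
noncomputable def ccdPath (v : Subsplit α → ℝ) (a d : Subsplit α) : ℝ :=
  ccdPathAux v ((Subsplit.clade a).card + 1) a d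

/-- CCD conditional path probability starting from a clade:
`q(W →* d | W) = Σ_{s'' : U(s'') = W} q(s'' | U(s'')) q(s'' →* d | s'')`. -/
noncomputable def ccdPathFromClade (v : Subsplit α → ℝ) (W : Finset α) (d : Subsplit α) : ℝ :=
  ∑ s'' ∈ subsplitsOn W, ccdCond v s'' * ccdPath v s'' d

end CCD

section SCD

variable {α : Type*} [DecidableEq α]

/-- SCD softmax conditional probability `q(s | t)`. -/
noncomputable def scdCond (v : PCSPair α → ℝ) (t s : Subsplit α) : ℝ :=
  Real.exp (v (t, s)) / ∑ s'' ∈ subsplitsOn (Subsplit.clade s), Real.exp (v (t, s''))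

/-- SCD probability of a topology `τ` on `X`: the product over PCSPs `(t → s)` of `τ` of
`q(s | t)`. -/
noncomputable def scdTopProb (v : PCSPair α → ℝ) (X : Finset α) (τ : Finset (Subsplit α)) : ℝ :=
  ∏ s ∈ τ, scdCond v (parentIn X τ s) s

/-- Unconditional subsplit probability `q(a)` for SCD-parameterized SBNs. -/
noncomputable def scdSubProb (T : Finset (Finset (Subsplit α))) (v : PCSPair α → ℝ)
    (X : Finset α) (a : Subsplit α) : ℝ :=
  ∑ τ ∈ T.filter (fun τ => a ∈ τ), scdTopProb v X τ

/-- Fuel-based recursion computing the SCD conditional path probability. -/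
noncomputable def scdPathAux (v : PCSPair α → ℝ) : ℕ → Subsplit α → Subsplit α → ℝ
  | 0, a, d => if d = a then 1 else 0
  | n + 1, a, d => if d = a then 1 else
      ∑ s'' ∈ childSubsplits a, scdCond v a s'' * scdPathAux v n s'' d

/-- SCD conditional path probability `q(a →* d | a)`. -/
noncomputable def scdPath (v : PCSPair α → ℝ) (a d : Subsplit α) : ℝ :=
  scdPathAux v ((Subsplit.clade a).card + 1) a d

/-- SCD conditional path probability from a subsplit `t` with designated child clade `W`:
`q(t/W →* d | t/W) = Σ_{s'' : U(s'') = W} q(s'' | t) q(s'' →* d | s'')`. -/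
noncomputable def scdPathFrom (v : PCSPair α → ℝ) (t : Subsplit α) (W : Finset α)
    (d : Subsplit α) : ℝ :=
  ∑ s'' ∈ subsplitsOn W, scdCond v t s'' * scdPath v s'' d

/-- Unconditional ancestor-descendant probability `q(a →* d)`: sum of `q(τ)` over topologies
`τ ∈ T` containing both `a` and `d` with `d` a descendant of `a`. -/
noncomputable def scdPairProb (T : Finset (Finset (Subsplit α))) (v : PCSPair α → ℝ)
    (X : Finset α) (a d : Subsplit α) : ℝ :=
  ∑ τ ∈ T.filter (fun τ => a ∈ τ ∧ d ∈ τ ∧ Descend a d), scdTopProb v X τ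

end SCD

/-!
The clades of a topology are laminar: two of its subsplits have disjoint clades, are equal, or
one lies below a child clade of the other (induction from the root, since parents have strictly
larger clades). For `s ∈ τ` whose clade meets `X̄` in at least two taxa, descending through the
child clade that carries all of `U(s) ∩ X̄` until the restriction becomes nontrivial gives a
member of `τ|X̄` with clade `U(s) ∩ X̄`. It is unique by laminarity, because a subsplit lying
below a child clade of `t` cannot have the same restricted clade as `t` once `t|X̄` is
nontrivial. Parents in `τ|X̄` are found by walking up from `s` until the sibling clade meets `X̄`.
-/

namespace Subsplit

variable {α : Type*}

@[simp] lemma valid_mk {Y Z : Finset α} : Valid (Sym2.mk Y Z) ↔ Disjoint Y Z := Iff.rfl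

@[simp] lemma nontriv_mk {Y Z : Finset α} : Nontriv (Sym2.mk Y Z) ↔ Y.Nonempty ∧ Z.Nonempty :=
  Iff.rfl

lemma Valid.disjoint_of_mem {s : Subsplit α} {C D : Finset α} (hv : Valid s) (hC : C ∈ s)
    (hD : D ∈ s) (hCD : C ≠ D) : Disjoint C D := by
  obtain ⟨E, rfl⟩ := Sym2.mem_iff_exists.1 hC
  obtain rfl | rfl := Sym2.mem_iff.1 hD
  · exact absurd rfl hCD
  · exact valid_mk.1 hv

variable [DecidableEq α]

@[simp] lemma clade_mk (Y Z : Finset α) : clade (Sym2.mk Y Z) = Y ∪ Z := rfl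

@[simp] lemma restrict_mk (Y Z B : Finset α) :
    restrict (Sym2.mk Y Z) B = Sym2.mk (Y ∩ B) (Z ∩ B) := rfl

lemma subset_clade_of_mem {s : Subsplit α} {C : Finset α} (h : C ∈ s) : C ⊆ clade s := by
  obtain ⟨D, rfl⟩ := Sym2.mem_iff_exists.1 h
  exact subset_union_left

lemma clade_restrict (s : Subsplit α) (B : Finset α) :
    clade (restrict s B) = clade s ∩ B := by
  induction s using Sym2.ind with
  | _ Y Z => exact (union_inter_distrib_right Y Z B).symm

lemma mem_restrict {s : Subsplit α} {B C : Finset α} :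
    C ∈ restrict s B ↔ ∃ D ∈ s, D ∩ B = C :=
  Sym2.mem_map

lemma Valid.restrict {s : Subsplit α} (hs : Valid s) (B : Finset α) : Valid (restrict s B) := by
  induction s using Sym2.ind with
  | _ Y Z => exact Disjoint.mono inter_subset_left inter_subset_left hs

lemma Valid.card_lt_card_clade {s : Subsplit α} {C : Finset α} (hv : Valid s) (hn : Nontriv s)
    (hC : C ∈ s) : C.card < (clade s).card := by
  obtain ⟨D, rfl⟩ := Sym2.mem_iff_exists.1 hC
  rw [clade_mk, card_union_of_disjoint (valid_mk.1 hv)]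
  have := (nontriv_mk.1 hn).2.card_pos
  omega

lemma Valid.two_le_card_clade {s : Subsplit α} (hv : Valid s) (hn : Nontriv s) :
    2 ≤ (clade s).card := by
  induction s using Sym2.ind with
  | _ Y Z =>
    have := hv.card_lt_card_clade hn (Sym2.mem_mk_left Y Z)
    have := (nontriv_mk.1 hn).1.card_pos
    omega

lemma Nontriv.clade_nonempty {s : Subsplit α} (hn : Nontriv s) : (clade s).Nonempty := by
  induction s using Sym2.ind with
  | _ Y Z => exact (nontriv_mk.1 hn).1.mono subset_union_left

lemma exists_mem_inter_eq_of_not_nontriv_restrict {s : Subsplit α} {B : Finset α}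
    (h : ¬ Nontriv (restrict s B)) : ∃ C ∈ s, C ∩ B = clade s ∩ B := by
  induction s using Sym2.ind with
  | _ Y Z =>
    simp only [restrict_mk, nontriv_mk, not_and_or, not_nonempty_iff_eq_empty] at h
    rcases h with hY | hZ
    · exact ⟨Z, Sym2.mem_mk_right Y Z, by simp [union_inter_distrib_right, hY]⟩
    · exact ⟨Y, Sym2.mem_mk_left Y Z, by simp [union_inter_distrib_right, hZ]⟩

/-- A nontrivial restriction of `t` meets the child clade of `t` that avoids `s`. -/
lemma clade_inter_ne_of_strictDesc {s t : Subsplit α} {B : Finset α} (hv : Valid t)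
    (hst : StrictDesc t s) (hn : Nontriv (restrict t B)) : clade s ∩ B ≠ clade t ∩ B := by
  obtain ⟨C, hC, hsC⟩ := hst
  obtain ⟨D, rfl⟩ := Sym2.mem_iff_exists.1 hC
  obtain ⟨x, hx⟩ := ((restrict_mk C D B ▸ hn) : Nontriv (Sym2.mk (C ∩ B) (D ∩ B))).2
  intro heq
  have hxs : x ∈ clade s ∩ B := heq ▸ inter_subset_inter_right subset_union_right hx
  exact disjoint_left.1 hv (hsC (mem_inter.1 hxs).1) (mem_inter.1 hx).1

end Subsplit

open Subsplit

section Restriction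

variable {α : Type*} [DecidableEq α]

lemma mem_restrictT {τ : Finset (Subsplit α)} {B : Finset α} {s' : Subsplit α} :
    s' ∈ restrictT τ B ↔ (∃ s ∈ τ, restrict s B = s') ∧ Nontriv s' := by
  simp [restrictT]

namespace IsTopology

variable {X : Finset α} {τ : Finset (Subsplit α)}

lemma exists_clade_eq (hτ : IsTopology X τ) {s : Subsplit α} (hs : s ∈ τ) {C : Finset α}
    (hC : C ∈ s) (h2 : 2 ≤ C.card) : ∃ t ∈ τ, clade t = C :=
  let ⟨t, ht, _⟩ := hτ.children s hs C hC h2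
  ⟨t, ht⟩

lemma clade_injOn (hτ : IsTopology X τ) : Set.InjOn clade (τ : Set (Subsplit α)) := by
  intro s hs t ht h
  rcases hτ.parentEx s hs with hX | ⟨p, hp, hsp⟩
  · exact hτ.root.unique ⟨hs, hX⟩ ⟨ht, h ▸ hX⟩
  · exact (hτ.children p hp _ hsp ((hτ.valid s hs).two_le_card_clade (hτ.nontriv s hs))).unique
      ⟨hs, rfl⟩ ⟨ht, h.symm⟩

/-- The parent of a subsplit has a strictly larger clade, so a counterexample with largest clade
cannot exist. -/
lemma induction_from_root (hτ : IsTopology X τ) {P : Subsplit α → Prop}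
    (root : ∀ s ∈ τ, clade s = X → P s)
    (step : ∀ s ∈ τ, ∀ p ∈ τ, clade s ∈ p → P p → P s) : ∀ s ∈ τ, P s := by
  by_contra! hbad
  obtain ⟨s, hs, hmax⟩ := (τ.filter (¬ P ·)).exists_max_image (fun s => (clade s).card)
    (by simpa [Finset.Nonempty] using hbad)
  rw [mem_filter] at hs
  rcases hτ.parentEx s hs.1 with hX | ⟨p, hp, hsp⟩
  · exact hs.2 (root s hs.1 hX)
  · refine hs.2 (step s hs.1 p hp hsp (by_contra fun hPp => ?_))
    have := hmax p (mem_filter.2 ⟨hp, hPp⟩)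
    have := (hτ.valid p hp).card_lt_card_clade (hτ.nontriv p hp) hsp
    omega

lemma eq_or_strictDesc_of_clade_eq (hτ : IsTopology X τ) {r t : Subsplit α} (hr : r ∈ τ)
    (hrX : clade r = X) (ht : t ∈ τ) : t = r ∨ StrictDesc r t := by
  refine hτ.induction_from_root
    (fun t ht htX => Or.inl (hτ.clade_injOn ht hr (htX.trans hrX.symm)))
    (fun t ht p hp htp ihp => Or.inr ?_) t ht
  rcases ihp with rfl | ⟨C, hC, hpC⟩
  · exact ⟨_, htp, subset_rfl⟩
  · exact ⟨C, hC, (subset_clade_of_mem htp).trans hpC⟩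

lemma laminar (hτ : IsTopology X τ) : ∀ s ∈ τ, ∀ t ∈ τ,
    Disjoint (clade s) (clade t) ∨ s = t ∨ StrictDesc t s ∨ StrictDesc s t := by
  refine hτ.induction_from_root (fun r hr hrX t ht => ?_) (fun s hs u hu hsu ihu => ?_)
  · rcases hτ.eq_or_strictDesc_of_clade_eq hr hrX ht with rfl | hrt
    · exact Or.inr (Or.inl rfl)
    · exact Or.inr (Or.inr (Or.inr hrt))
  refine hτ.induction_from_root (fun t ht htX => ?_) (fun t ht v hv htv ihv => ?_)
  · rcases hτ.eq_or_strictDesc_of_clade_eq ht htX hs with rfl | hts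
    · exact Or.inr (Or.inl rfl)
    · exact Or.inr (Or.inr (Or.inl hts))
  have hsne := (hτ.nontriv s hs).clade_nonempty
  rcases ihv with hdisj | rfl | ⟨D, hD, hsD⟩ | ⟨C, hC, hvC⟩
  · exact Or.inl (hdisj.mono_right (subset_clade_of_mem htv))
  · exact Or.inr (Or.inr (Or.inr ⟨_, htv, subset_rfl⟩))
  · by_cases hDt : D = clade t
    · subst hDt
      -- Now `clade s ⊆ clade t`; compare `t` with the parent `u` of `s`.
      rcases ihu t ht with hdisj | rfl | ⟨C, hC, huC⟩ | ⟨C, hC, htC⟩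
      · exact absurd (hdisj.mono_left (subset_clade_of_mem hsu))
          (not_disjoint_iff_nonempty_inter.2 (by rwa [inter_eq_left.2 hsD]))
      · exact Or.inr (Or.inr (Or.inl ⟨_, hsu, subset_rfl⟩))
      · exact Or.inr (Or.inr (Or.inl ⟨C, hC, (subset_clade_of_mem hsu).trans huC⟩))
      · by_cases hCs : C = clade s
        · exact Or.inr (Or.inl (hτ.clade_injOn hs ht (hsD.antisymm' (hCs ▸ htC)).symm))
        · exact absurd ((hτ.valid u hu).disjoint_of_mem hsu hC (Ne.symm hCs))
            (not_disjoint_iff_nonempty_inter.2 (by rwa [inter_eq_left.2 (hsD.trans htC)]))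
    · exact Or.inl (((hτ.valid v hv).disjoint_of_mem hD htv hDt).mono_left hsD)
  · exact Or.inr (Or.inr (Or.inr ⟨C, hC, (subset_clade_of_mem htv).trans hvC⟩))

lemma exists_nontriv_restrict (hτ : IsTopology X τ) {B : Finset α} {s : Subsplit α}
    (hs : s ∈ τ) (h2 : 2 ≤ (clade s ∩ B).card) :
    ∃ t ∈ τ, Nontriv (restrict t B) ∧ clade t ∩ B = clade s ∩ B := by
  induction hcard : (clade s).card using Nat.strong_induction_on generalizing s with
  | _ n ih =>
  by_cases hn : Nontriv (restrict s B)
  · exact ⟨s, hs, hn, rfl⟩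
  obtain ⟨C, hC, hCB⟩ := exists_mem_inter_eq_of_not_nontriv_restrict hn
  have hC2 : 2 ≤ C.card := (hCB ▸ h2).trans (card_le_card inter_subset_left)
  obtain ⟨t, ht, rfl⟩ := hτ.exists_clade_eq hs hC hC2
  rw [← hCB] at h2 ⊢
  exact ih _ (hcard ▸ (hτ.valid s hs).card_lt_card_clade (hτ.nontriv s hs) hC) ht h2 rfl

lemma clade_injOn_restrictT (hτ : IsTopology X τ) (B : Finset α) :
    Set.InjOn clade (restrictT τ B : Set (Subsplit α)) := by
  intro s' hs' t' ht' h
  obtain ⟨⟨s, hs, rfl⟩, hns⟩ := mem_restrictT.1 hs'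
  obtain ⟨⟨t, ht, rfl⟩, hnt⟩ := mem_restrictT.1 ht'
  rw [clade_restrict, clade_restrict] at h
  rcases hτ.laminar s hs t ht with hdisj | rfl | hts | hst
  · obtain ⟨x, hx⟩ := clade_restrict t B ▸ hnt.clade_nonempty
    exact (disjoint_left.1 (hdisj.mono inter_subset_left inter_subset_left) (h ▸ hx) hx).elim
  · rfl
  · exact absurd h (clade_inter_ne_of_strictDesc (hτ.valid t ht) hts hnt)
  · exact absurd h.symm (clade_inter_ne_of_strictDesc (hτ.valid s hs) hst hns)

lemma existsUnique_restrictT_clade_eq (hτ : IsTopology X τ) {B : Finset α} {s : Subsplit α}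
    (hs : s ∈ τ) (h2 : 2 ≤ (clade s ∩ B).card) :
    ∃! s', s' ∈ restrictT τ B ∧ clade s' = clade s ∩ B := by
  obtain ⟨t, ht, hnt, htB⟩ := hτ.exists_nontriv_restrict hs h2
  have hmem : restrict t B ∈ restrictT τ B := mem_restrictT.2 ⟨⟨t, ht, rfl⟩, hnt⟩
  have hclade : clade (restrict t B) = clade s ∩ B := (clade_restrict t B).trans htB
  exact ⟨_, ⟨hmem, hclade⟩,
    fun u hu => hτ.clade_injOn_restrictT B hu.1 hmem (hu.2.trans hclade.symm)⟩

/-- Walking up from `s`, the restricted clade stays the same until the sibling clade meets `B`;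
the parent found there restricts to a nontrivial subsplit with child clade `clade s ∩ B`. -/
lemma exists_restrictT_clade_mem (hτ : IsTopology X τ) {B : Finset α} (hB : B ⊆ X) :
    ∀ s ∈ τ, (clade s ∩ B).Nonempty → clade s ∩ B ≠ B →
      ∃ t' ∈ restrictT τ B, clade s ∩ B ∈ t' := by
  refine hτ.induction_from_root
    (fun s _ hsX _ hne => absurd (by rw [hsX, inter_eq_right.2 hB]) hne)
    (fun s _ p hp hsp ih hsB hne => ?_)
  obtain ⟨D, rfl⟩ := Sym2.mem_iff_exists.1 hsp
  by_cases hD : (D ∩ B).Nonempty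
  · exact ⟨_, mem_restrictT.2 ⟨⟨_, hp, rfl⟩, nontriv_mk.2 ⟨hsB, hD⟩⟩, Sym2.mem_mk_left _ _⟩
  · have hpB : clade (Sym2.mk (clade s) D) ∩ B = clade s ∩ B := by
      simp [union_inter_distrib_right, not_nonempty_iff_eq_empty.1 hD]
    exact hpB ▸ ih (hpB ▸ hsB) (hpB ▸ hne)

end IsTopology

end Restriction

section Statements

variable {α : Type*} [DecidableEq α]
theorem stmt10 (X Xb : Finset α) (hsub : Xb ⊆ X) (hXb : 2 ≤ Xb.card)
    (τ : Finset (Subsplit α)) (hτ : IsTopology X τ) :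
    IsTopology Xb (restrictT τ Xb) := by
  obtain ⟨r, ⟨hr, hrX⟩, -⟩ := hτ.root
  have hrXb : clade r ∩ Xb = Xb := by rw [hrX, inter_eq_right.2 hsub]
  refine ⟨hXb, fun s' hs' => ?_, fun s' hs' => (mem_restrictT.1 hs').2, ?_,
    fun s' hs' C' hC' hC'2 => ?_, fun s' hs' => ?_⟩
  · obtain ⟨⟨s, hs, rfl⟩, -⟩ := mem_restrictT.1 hs'
    exact (hτ.valid s hs).restrict Xb
  · have := hτ.existsUnique_restrictT_clade_eq hr (hrXb ▸ hXb)
    rwa [hrXb] at this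
  · obtain ⟨⟨s, hs, rfl⟩, -⟩ := mem_restrictT.1 hs'
    obtain ⟨C, hC, rfl⟩ := mem_restrict.1 hC'
    obtain ⟨t, ht, rfl⟩ := hτ.exists_clade_eq hs hC (hC'2.trans (card_le_card inter_subset_left))
    exact hτ.existsUnique_restrictT_clade_eq ht hC'2
  · obtain ⟨⟨s, hs, rfl⟩, hns⟩ := mem_restrictT.1 hs'
    rw [clade_restrict]
    by_cases hsXb : clade s ∩ Xb = Xb
    · exact Or.inl hsXb
    · exact Or.inr (hτ.exists_restrictT_clade_mem hsub s hs
        (clade_restrict s Xb ▸ hns.clade_nonempty) hsXb)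

end Statements
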